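/- arXiv:2312.01405 — 2 statements merged into one kernel-verified Lean document; each statement's English description precedes it below -/
import Mathlib

section
/- Let c ∈ (0,1) and let A_c⁺ be the linear map of ℝ² given by the matrix [[1, −√(1−c)/√c], [0, 1/√c]], and set μ_c⁺ = arccos(√(1−c))/π ∈ (0, 1/2). Then (A_c⁺)^{−1} V_{1/2} = V_{μ_c⁺}, i.e. the preimage of the quarter-plane cone under A_c⁺ is the infinite cone with vertex at the origin and opening angle μ_c⁺ π. Moreover: (a) P_c⁺(A_c⁺ x) = |x|²/2 for all x ∈ V_{μ_c⁺}, where P_c⁺(y) = |y|²/2 + √(1−c) y₁ y₂; (b) |A_c⁺ x|²/2 = |x|²/2 for all x ∈ ∂V_{μ_c⁺}; consequently, if u ∈ C²(V_{1/2}) ∩ C(closure V_{1/2}) is a convex solution of det D²u = c in V_{1/2} with u(y) = |y|²/2 on ∂V_{1/2}, then u_c := u ∘ A_c⁺ satisfies det D²u_c = 1 in V_{μ_c⁺} and u_c(x) = |x|²/2 on ∂V_{μ_c⁺}. -/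
open Real Set Metric Filter

noncomputable section

/-- The point of the Euclidean plane with Cartesian coordinates `(a, b)`. -/
def pt2 (a b : ℝ) : EuclideanSpace ℝ (Fin 2) := WithLp.toLp 2 ![a, b]

/-- `Cone μ` is the open infinite cone `V_μ` with vertex at the origin and
opening angle `μ * π`. -/
def Cone (μ : ℝ) : Set (EuclideanSpace ℝ (Fin 2)) :=
  {x | ∃ r θ : ℝ, 0 < r ∧ 0 < θ ∧ θ < μ * π ∧ x 0 = r * Real.cos θ ∧ x 1 = r * Real.sin θ}

/-- The angular coordinate `θ(x) ∈ [0, π]` of a point of the (closed) upper half plane;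
on `closure (Cone μ) \ {0}` (with `μ < 1`) it is the polar angle of `x`. -/
def angle2 (x : EuclideanSpace ℝ (Fin 2)) : ℝ := Real.arccos (x 0 / ‖x‖)

/-- The second partial derivatives (Hessian matrix entries) of `u` at `x`. -/
def hess2 (u : EuclideanSpace ℝ (Fin 2) → ℝ) (x : EuclideanSpace ℝ (Fin 2)) (i j : Fin 2) : ℝ :=
  fderiv ℝ (fun y => fderiv ℝ u y (EuclideanSpace.single j 1)) x (EuclideanSpace.single i 1)

/-- The Monge–Ampère operator `det D²u` in the plane. -/
def detD2 (u : EuclideanSpace ℝ (Fin 2) → ℝ) (x : EuclideanSpace ℝ (Fin 2)) : ℝ :=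
  hess2 u x 0 0 * hess2 u x 1 1 - hess2 u x 0 1 * hess2 u x 1 0

/-- `v ∈ C^{2,α}(s)` : `v` is `C²` on `s` with `α`-Hölder continuous second derivatives. -/
def C2Holder (v : EuclideanSpace ℝ (Fin 2) → ℝ) (s : Set (EuclideanSpace ℝ (Fin 2)))
    (α : ℝ) : Prop :=
  ContDiffOn ℝ 2 v s ∧
    ∃ C : NNReal, ∀ i j : Fin 2, HolderOnWith C α.toNNReal (fun x => hess2 v x i j) s

/-- `μs` is a strictly increasing enumeration (indexed from `1`) of the set `I`. -/
def IsEnum (I : Set ℝ) (μs : ℕ → ℝ) : Prop :=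
  (∀ n, 1 ≤ n → μs n ∈ I) ∧ (∀ y ∈ I, ∃ n, 1 ≤ n ∧ μs n = y) ∧
    (∀ m n, 1 ≤ m → m < n → μs m < μs n)

/-! `A_c⁺` is the shear `coneShear α` with `α = arccos √(1-c)`: it fixes the horizontal axis and
sends the ray at angle `α` to the vertical one, so it maps `V_{α/π}` onto the quadrant. Its
determinant is `1 / sin α = 1 / √c`, and since `D²(u ∘ L) = Lᵀ (D²u ∘ L) L` for linear `L`,
composing with it divides `det D²u` by `c`. The identity
`|A x|² + 2 cos α (A x)₁ (A x)₂ = |x|²` gives `(a)`; on `∂V_{α/π}` one of `x₂` and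
`x₁ sin α - x₂ cos α` vanishes, hence so does the cross term `(A x)₁ (A x)₂`, which gives `(b)`. -/

open Topology

local notation "ℝ²" => EuclideanSpace ℝ (Fin 2)

lemma norm_sq_eq_sq_add_sq (x : ℝ²) : ‖x‖ ^ 2 = x 0 ^ 2 + x 1 ^ 2 := by
  simp [EuclideanSpace.norm_sq_eq, Fin.sum_univ_two]

lemma mem_cone_iff {μ : ℝ} (hμ0 : 0 < μ) (hμ1 : μ ≤ 1) {x : ℝ²} :
    x ∈ Cone μ ↔ 0 < x 1 ∧ 0 < x 0 * sin (μ * π) - x 1 * cos (μ * π) := by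
  have polar (r θ : ℝ) :
      r * cos θ * sin (μ * π) - r * sin θ * cos (μ * π) = r * sin (μ * π - θ) := by
    rw [sin_sub]; ring
  have hμπ : 0 < μ * π ∧ μ * π ≤ π := ⟨by positivity, by nlinarith [pi_pos]⟩
  constructor
  · rintro ⟨r, θ, hr, hθ0, hθμ, hx0, hx1⟩
    rw [hx0, hx1, polar]
    exact ⟨mul_pos hr (sin_pos_of_pos_of_lt_pi hθ0 (by linarith)),
      mul_pos hr (sin_pos_of_pos_of_lt_pi (by linarith) (by linarith))⟩
  · rintro ⟨hx1, hℓ⟩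
    set z : ℂ := ⟨x 0, x 1⟩
    have harg : 0 < z.arg := (Complex.arg_nonneg_iff.2 hx1.le).lt_of_ne' fun h =>
      hx1.ne' (Complex.arg_eq_zero_iff.1 h).2
    refine ⟨‖z‖, z.arg, norm_pos_iff.2 fun h => hx1.ne' (congrArg Complex.im h), harg, ?_,
      (Complex.norm_mul_cos_arg z).symm, (Complex.norm_mul_sin_arg z).symm⟩
    by_contra! h
    have : sin (μ * π - z.arg) ≤ 0 :=
      sin_nonpos_of_nonpos_of_neg_pi_le (by linarith) (by linarith [Complex.arg_le_pi z])
    have hx : x 0 * sin (μ * π) - x 1 * cos (μ * π) = ‖z‖ * sin (μ * π - z.arg) := by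
      rw [← polar, Complex.norm_mul_cos_arg, Complex.norm_mul_sin_arg]
    nlinarith [norm_nonneg z]

lemma cone_eq_inter {μ : ℝ} (hμ0 : 0 < μ) (hμ1 : μ ≤ 1) :
    Cone μ = {x : ℝ² | 0 < x 1} ∩ {x | 0 < x 0 * sin (μ * π) - x 1 * cos (μ * π)} :=
  Set.ext fun _ => mem_cone_iff hμ0 hμ1

lemma isOpen_cone {μ : ℝ} (hμ0 : 0 < μ) (hμ1 : μ ≤ 1) : IsOpen (Cone μ) := by
  rw [cone_eq_inter hμ0 hμ1]
  exact (isOpen_lt continuous_const (by fun_prop)).inter (isOpen_lt continuous_const (by fun_prop))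

lemma frontier_cone_subset {μ : ℝ} (hμ0 : 0 < μ) (hμ1 : μ ≤ 1) :
    frontier (Cone μ) ⊆ {x | x 1 = 0 ∨ x 0 * sin (μ * π) - x 1 * cos (μ * π) = 0} := by
  rw [cone_eq_inter hμ0 hμ1]
  refine (frontier_inter_subset _ _).trans (union_subset ?_ ?_)
  · exact fun x hx => Or.inl (frontier_lt_subset_eq continuous_const (by fun_prop) hx.1).symm
  · exact fun x hx => Or.inr (frontier_lt_subset_eq continuous_const (by fun_prop) hx.2).symm

lemma fderiv_apply_fderiv {u : ℝ² → ℝ} {x : ℝ²} (hu : DifferentiableAt ℝ (fderiv ℝ u) x)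
    (v w : ℝ²) : fderiv ℝ (fun y => fderiv ℝ u y v) x w = fderiv ℝ (fderiv ℝ u) x w v := by
  rw [fderiv_clm_apply hu (differentiableAt_const v)]
  simp

lemma hess2_comp_clm (L : ℝ² →L[ℝ] ℝ²) {u : ℝ² → ℝ} {x : ℝ²} (hu : ContDiffAt ℝ 2 u (L x))
    (i j : Fin 2) :
    hess2 (u ∘ L) x i j =
      fderiv ℝ (fderiv ℝ u) (L x) (L (EuclideanSpace.single i 1))
        (L (EuclideanSpace.single j 1)) := by
  set v := L (EuclideanSpace.single j 1)
  have hdu : ∀ᶠ y in 𝓝 x, DifferentiableAt ℝ u (L y) :=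
    L.continuous.continuousAt.eventually ((hu.eventually (by simp)).mono fun _ h =>
      h.differentiableAt (by norm_num))
  have hd2u : DifferentiableAt ℝ (fderiv ℝ u) (L x) :=
    (hu.fderiv_right (m := 1) le_rfl).differentiableAt one_ne_zero
  have hchain : (fun y => fderiv ℝ (u ∘ L) y (EuclideanSpace.single j 1)) =ᶠ[𝓝 x]
      (fun z => fderiv ℝ u z v) ∘ L := hdu.mono fun y hy => by
    simp [fderiv_comp y hy L.differentiableAt, v]
  have hdv : DifferentiableAt ℝ (fun z => fderiv ℝ u z v) (L x) :=
    hd2u.clm_apply (differentiableAt_const v)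
  rw [hess2, hchain.fderiv_eq, fderiv_comp x hdv L.differentiableAt, L.fderiv]
  exact fderiv_apply_fderiv hd2u _ _

lemma LinearMap.det_euclideanSpace_fin_two (f : ℝ² →ₗ[ℝ] ℝ²) :
    LinearMap.det f = f (EuclideanSpace.single 0 1) 0 * f (EuclideanSpace.single 1 1) 1 -
      f (EuclideanSpace.single 1 1) 0 * f (EuclideanSpace.single 0 1) 1 := by
  rw [← LinearMap.det_toMatrix (EuclideanSpace.basisFun (Fin 2) ℝ).toBasis, Matrix.det_fin_two]
  simp [LinearMap.toMatrix_apply]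

lemma apply_apply_eq_sum (B : ℝ² →L[ℝ] ℝ² →L[ℝ] ℝ) (v w : ℝ²) :
    B v w = ∑ i, ∑ j, v i * w j * B (EuclideanSpace.single i 1) (EuclideanSpace.single j 1) := by
  conv_lhs => rw [← (EuclideanSpace.basisFun (Fin 2) ℝ).sum_repr v,
    ← (EuclideanSpace.basisFun (Fin 2) ℝ).sum_repr w]
  simp [Fin.sum_univ_two]
  ring

lemma detD2_comp_clm (L : ℝ² →L[ℝ] ℝ²) {u : ℝ² → ℝ} {x : ℝ²} (hu : ContDiffAt ℝ 2 u (L x)) :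
    detD2 (u ∘ L) x = LinearMap.det (L : ℝ² →ₗ[ℝ] ℝ²) ^ 2 * detD2 u (L x) := by
  have hd2u : DifferentiableAt ℝ (fderiv ℝ u) (L x) :=
    (hu.fderiv_right (m := 1) le_rfl).differentiableAt one_ne_zero
  simp only [detD2, hess2_comp_clm L hu]
  simp only [hess2, fderiv_apply_fderiv hd2u, LinearMap.det_euclideanSpace_fin_two,
    ContinuousLinearMap.coe_coe, apply_apply_eq_sum (fderiv ℝ (fderiv ℝ u) (L x)) (L _),
    Fin.sum_univ_two]
  ring

def triangularCLM (p q : ℝ) : ℝ² →L[ℝ] ℝ² :=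
  LinearMap.toContinuousLinearMap
    { toFun := fun x => pt2 (x 0 + p * x 1) (q * x 1)
      map_add' := fun x y => by ext i; fin_cases i <;> simp [pt2] <;> ring
      map_smul' := fun a x => by ext i; fin_cases i <;> simp [pt2] <;> ring }

@[simp] lemma triangularCLM_apply_zero (p q : ℝ) (x : ℝ²) :
    triangularCLM p q x 0 = x 0 + p * x 1 := rfl

@[simp] lemma triangularCLM_apply_one (p q : ℝ) (x : ℝ²) :
    triangularCLM p q x 1 = q * x 1 := rfl

lemma det_triangularCLM (p q : ℝ) : LinearMap.det (triangularCLM p q : ℝ² →ₗ[ℝ] ℝ²) = q := by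
  simp [LinearMap.det_euclideanSpace_fin_two]

lemma triangularCLM_surjective (p : ℝ) {q : ℝ} (hq : q ≠ 0) :
    Function.Surjective (triangularCLM p q) := fun y =>
  ⟨pt2 (y 0 - p * (y 1 / q)) (y 1 / q), by ext i; fin_cases i <;> simp [pt2, mul_div_cancel₀ _ hq]⟩

def coneShear (α : ℝ) : ℝ² →L[ℝ] ℝ² := triangularCLM (-(cos α / sin α)) (sin α)⁻¹

section coneShear

variable {α : ℝ}

lemma coneShear_apply_zero_mul_apply_one (hα : sin α ≠ 0) (x : ℝ²) :
    coneShear α x 0 * coneShear α x 1 = (x 0 * sin α - x 1 * cos α) * x 1 / sin α ^ 2 := by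
  simp only [coneShear, triangularCLM_apply_zero, triangularCLM_apply_one]
  field_simp
  ring

lemma norm_sq_coneShear_add (hα : sin α ≠ 0) (x : ℝ²) :
    ‖coneShear α x‖ ^ 2 + 2 * cos α * (coneShear α x 0 * coneShear α x 1) = ‖x‖ ^ 2 := by
  rw [coneShear_apply_zero_mul_apply_one hα, norm_sq_eq_sq_add_sq, norm_sq_eq_sq_add_sq]
  simp only [coneShear, triangularCLM_apply_zero, triangularCLM_apply_one]
  field_simp
  linear_combination -(x 1) ^ 2 * sin_sq_add_cos_sq α

lemma preimage_coneShear_cone_half (hα0 : 0 < α) (hαπ : α < π) :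
    coneShear α ⁻¹' Cone (1 / 2) = Cone (α / π) := by
  have hsin : 0 < sin α := sin_pos_of_pos_of_lt_pi hα0 hαπ
  ext x
  rw [mem_preimage, mem_cone_iff (by norm_num) (by norm_num), one_div_mul_eq_div, sin_pi_div_two,
    cos_pi_div_two, mem_cone_iff (by positivity) ((div_le_one pi_pos).2 hαπ.le),
    div_mul_cancel₀ _ pi_ne_zero]
  simp only [coneShear, triangularCLM_apply_zero, triangularCLM_apply_one]
  have hℓ : (x 0 + -(cos α / sin α) * x 1) * 1 - (sin α)⁻¹ * x 1 * 0 =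
      (x 0 * sin α - x 1 * cos α) / sin α := by
    field_simp
    ring
  rw [hℓ, mul_pos_iff_of_pos_left (inv_pos.2 hsin), div_pos_iff_of_pos_right hsin]

lemma sq_norm_coneShear_of_mem_frontier (hα0 : 0 < α) (hαπ : α < π) {x : ℝ²}
    (hx : x ∈ frontier (Cone (α / π))) : ‖coneShear α x‖ ^ 2 = ‖x‖ ^ 2 := by
  have hsin : sin α ≠ 0 := (sin_pos_of_pos_of_lt_pi hα0 hαπ).ne'
  have hx' := frontier_cone_subset (by positivity) ((div_le_one pi_pos).2 hαπ.le) hx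
  rw [div_mul_cancel₀ _ pi_ne_zero] at hx'
  rw [← norm_sq_coneShear_add hsin x, coneShear_apply_zero_mul_apply_one hsin]
  rcases hx' with h | h <;> simp [h]

lemma coneShear_surjective (hα : sin α ≠ 0) : Function.Surjective (coneShear α) :=
  triangularCLM_surjective _ (inv_ne_zero hα)

lemma detD2_comp_coneShear {u : ℝ² → ℝ} {x : ℝ²} (hu : ContDiffAt ℝ 2 u (coneShear α x)) :
    detD2 (u ∘ coneShear α) x = detD2 u (coneShear α x) / sin α ^ 2 := by
  rw [detD2_comp_clm _ hu, coneShear, det_triangularCLM, inv_pow, inv_mul_eq_div]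

end coneShear

/-- The change of variables `A_c⁺` with matrix `[[1, -√(1-c)/√c], [0, 1/√c]]`:
it maps `V_{μ_c⁺}` (with `μ_c⁺ = arccos(√(1-c))/π ∈ (0, 1/2)`) onto the quarter plane
`V_{1/2}`, pulls `P_c⁺(y) = |y|²/2 + √(1-c) y₁y₂` back to `|x|²/2`, preserves `|x|²/2`
on `∂V_{μ_c⁺}`, and transforms convex solutions of `det D²u = c` in `V_{1/2}` with
boundary data `|y|²/2` into solutions of `det D²u_c = 1` in `V_{μ_c⁺}` with boundary
data `|x|²/2`, where `u_c = u ∘ A_c⁺`. -/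
theorem affine_normalization
    (c : ℝ) (hc : c ∈ Set.Ioo (0 : ℝ) 1)
    (A : EuclideanSpace ℝ (Fin 2) → EuclideanSpace ℝ (Fin 2))
    (hA : ∀ x, A x = pt2 (x 0 - Real.sqrt (1 - c) / Real.sqrt c * x 1) (x 1 / Real.sqrt c))
    (μc : ℝ) (hμc : μc = Real.arccos (Real.sqrt (1 - c)) / π) :
    (0 < μc ∧ μc < 1 / 2) ∧
    A ⁻¹' Cone (1 / 2) = Cone μc ∧
    (∀ x ∈ Cone μc,
      ‖A x‖ ^ 2 / 2 + Real.sqrt (1 - c) * (A x 0 * A x 1) = ‖x‖ ^ 2 / 2) ∧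
    (∀ x ∈ frontier (Cone μc), ‖A x‖ ^ 2 / 2 = ‖x‖ ^ 2 / 2) ∧
    (∀ u : EuclideanSpace ℝ (Fin 2) → ℝ,
      ContDiffOn ℝ 2 u (Cone (1 / 2)) →
      ContinuousOn u (closure (Cone (1 / 2))) →
      ConvexOn ℝ (Cone (1 / 2)) u →
      (∀ y ∈ Cone (1 / 2), detD2 u y = c) →
      (∀ y ∈ frontier (Cone (1 / 2)), u y = ‖y‖ ^ 2 / 2) →
      (∀ x ∈ Cone μc, detD2 (u ∘ A) x = 1) ∧
      (∀ x ∈ frontier (Cone μc), (u ∘ A) x = ‖x‖ ^ 2 / 2)) := by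
  obtain ⟨hc0, hc1⟩ := hc
  set α := arccos √(1 - c) with hα
  have hcos : cos α = √(1 - c) := cos_arccos (by linarith [sqrt_nonneg (1 - c)])
    (sqrt_le_one.2 (by linarith))
  have hsin : sin α = √c := by rw [hα, sin_arccos, sq_sqrt (by linarith), sub_sub_cancel]
  have hα0 : 0 < α := arccos_pos.2 ((sqrt_lt' one_pos).2 (by linarith))
  have hα2 : α < π / 2 := arccos_lt_pi_div_two.2 (sqrt_pos.2 (by linarith))
  have hsin0 : sin α ≠ 0 := hsin ▸ (sqrt_pos.2 hc0).ne'
  obtain rfl : A = coneShear α := by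
    funext x
    rw [hA]
    ext i
    fin_cases i <;> simp [pt2, coneShear, hcos, hsin] <;> ring
  subst hμc
  have hpre := preimage_coneShear_cone_half hα0 (by linarith)
  refine ⟨⟨by positivity, by rw [div_lt_iff₀ pi_pos]; linarith⟩, hpre, fun x _ => ?_,
    fun x hx => ?_, fun u hu _ _ hMA hub => ⟨fun x hx => ?_, fun x hx => ?_⟩⟩
  · linarith [hcos ▸ norm_sq_coneShear_add hsin0 x]
  · rw [sq_norm_coneShear_of_mem_frontier hα0 (by linarith) hx]
  · rw [← hpre] at hx
    have hu' := hu.contDiffAt ((isOpen_cone (by norm_num) (by norm_num)).mem_nhds hx)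
    rw [detD2_comp_coneShear hu', hMA _ hx, hsin, sq_sqrt hc0.le, div_self hc0.ne']
  · have hAx : coneShear α x ∈ frontier (Cone (1 / 2)) := by
      rwa [← hpre, ContinuousLinearMap.frontier_preimage _ (coneShear_surjective hsin0)] at hx
    rw [Function.comp_apply, hub _ hAx, sq_norm_coneShear_of_mem_frontier hα0 (by linarith) hx]
end
end

section
/- Let Ω = (0,1)³ ⊂ ℝ³ and P(x) = (x₁² + x₂² + x₃²)/2 − x₁x₂/2. Let f̂ be a smooth function on closure(Ω) such that f̂ = 3/4 at each of the eight vertices of the cube and 0 < f̂ < 3/4 at every other point of closure(Ω). Then there is no convex function u ∈ C²(closure(Ω)) satisfying det D²u = f̂ in Ω and u = P on ∂Ω. -/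
open Real Set Metric

noncomputable section

/-- The second partial derivatives (Hessian matrix entries) of `u : ℝ³ → ℝ` at `x`. -/
def hess3 (u : EuclideanSpace ℝ (Fin 3) → ℝ) (x : EuclideanSpace ℝ (Fin 3)) (i j : Fin 3) : ℝ :=
  fderiv ℝ (fun y => fderiv ℝ u y (EuclideanSpace.single j 1)) x (EuclideanSpace.single i 1)

/-- The Monge–Ampère operator `det D²u` in dimension 3. -/
def detD2₃ (u : EuclideanSpace ℝ (Fin 3) → ℝ) (x : EuclideanSpace ℝ (Fin 3)) : ℝ :=
  (Matrix.of (hess3 u x)).det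

/-- The open unit cube `Ω = (0,1)³ ⊂ ℝ³`. -/
def unitCube : Set (EuclideanSpace ℝ (Fin 3)) :=
  {x | ∀ i : Fin 3, x i ∈ Set.Ioo (0 : ℝ) 1}

/-- A point of the closed unit cube is a vertex iff each coordinate is `0` or `1`. -/
def IsCubeVertex (x : EuclideanSpace ℝ (Fin 3)) : Prop :=
  ∀ i : Fin 3, x i = 0 ∨ x i = 1

namespace Ex31

abbrev E3 := EuclideanSpace ℝ (Fin 3)

def ee (i : Fin 3) : E3 := EuclideanSpace.single i 1

lemma isOpen_unitCube : IsOpen unitCube := by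
  have : unitCube = ⋂ i : Fin 3, (EuclideanSpace.proj (𝕜 := ℝ) i) ⁻¹' (Set.Ioo 0 1) := by
    ext x; simp [unitCube, PiLp.proj_apply]
  rw [this]
  exact isOpen_iInter_of_finite fun i =>
    isOpen_Ioo.preimage (EuclideanSpace.proj i).continuous


lemma convex_unitCube : Convex ℝ unitCube := by
  intro x hx y hy a b ha hb hab
  intro i
  have hxi := hx i; have hyi := hy i
  have : (a • x + b • y) i = a * x i + b * y i := by
    simp [PiLp.add_apply, PiLp.smul_apply, smul_eq_mul]
  rw [this]
  exact (convex_Ioo (0:ℝ) 1) hxi hyi ha hb hab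

lemma mem_closure_unitCube {x : E3} : x ∈ closure unitCube ↔ ∀ i, x i ∈ Set.Icc (0:ℝ) 1 := by
  constructor
  · intro hx i
    have hcl : closure unitCube ⊆ {y : E3 | ∀ i, y i ∈ Set.Icc (0:ℝ) 1} := by
      apply closure_minimal
      · intro y hy j; exact ⟨(hy j).1.le, (hy j).2.le⟩
      · have : {y : E3 | ∀ i, y i ∈ Set.Icc (0:ℝ) 1}
            = ⋂ i : Fin 3, (EuclideanSpace.proj (𝕜 := ℝ) i) ⁻¹' (Set.Icc 0 1) := by
          ext y; simp [PiLp.proj_apply]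
        rw [this]
        exact isClosed_iInter fun i => isClosed_Icc.preimage (EuclideanSpace.proj i).continuous
    exact hcl hx i
  · intro hx
    set c : E3 := WithLp.toLp 2 (fun _ => (1:ℝ)/2) with hc
    have hmem : ∀ θ : ℝ, θ ∈ Set.Ioc (0:ℝ) 1 → (1 - θ) • x + θ • c ∈ unitCube := by
      intro θ hθ i
      have hxi := hx i
      have : ((1 - θ) • x + θ • c) i = (1 - θ) * x i + θ * (1/2) := by
        simp [PiLp.add_apply, PiLp.smul_apply, smul_eq_mul, hc]
      rw [this]
      constructor
      · nlinarith [hxi.1, hθ.1, hθ.2]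
      · nlinarith [hxi.2, hθ.1, hθ.2]
    have htend : Filter.Tendsto (fun θ : ℝ => (1 - θ) • x + θ • c)
        (nhdsWithin 0 (Set.Ioc (0:ℝ) 1)) (nhds x) := by
      have : Filter.Tendsto (fun θ : ℝ => (1 - θ) • x + θ • c) (nhds 0) (nhds x) := by
        have h1 : Filter.Tendsto (fun θ : ℝ => (1 - θ)) (nhds 0) (nhds 1) := by
          have : Continuous (fun θ : ℝ => 1 - θ) := continuous_const.sub continuous_id
          simpa using this.tendsto (0:ℝ)
        have h2 : Filter.Tendsto (fun θ : ℝ => θ) (nhds 0) (nhds 0) := Filter.tendsto_id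
        have := (h1.smul_const x).add (h2.smul_const c)
        simpa using this
      exact this.mono_left nhdsWithin_le_nhds
    haveI : (nhdsWithin (0:ℝ) (Set.Ioc (0:ℝ) 1)).NeBot := left_nhdsWithin_Ioc_neBot (by norm_num)
    refine mem_closure_of_tendsto htend ?_
    filter_upwards [self_mem_nhdsWithin] with θ hθ using hmem θ hθ

lemma convex_K : Convex ℝ (closure unitCube) := convex_unitCube.closure

lemma nonempty_interior_K : ((interior (closure unitCube) : Set E3)).Nonempty := by
  have hc : (WithLp.toLp 2 (fun _ => (1:ℝ)/2) : E3) ∈ unitCube := by intro i; norm_num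
  refine ⟨(WithLp.toLp 2 (fun _ => (1:ℝ)/2) : E3), ?_⟩
  have h1 : unitCube ⊆ interior (closure unitCube) :=
    interior_maximal subset_closure isOpen_unitCube
  exact h1 hc

lemma uniqueDiffOn_K : UniqueDiffOn ℝ (closure unitCube) :=
  uniqueDiffOn_convex convex_K nonempty_interior_K

lemma isCompact_K : IsCompact (closure unitCube) := by
  have hb : Bornology.IsBounded unitCube := by
    apply (Metric.isBounded_iff_subset_closedBall 0).mpr
    refine ⟨3, fun x hx => ?_⟩
    have habs : ∀ i, |x i| ≤ 1 := fun i => abs_le.mpr ⟨by linarith [(hx i).1], (hx i).2.le⟩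
    have : ‖x‖ ≤ 3 := by
      rw [EuclideanSpace.norm_eq]
      have hsum : (∑ i, ‖x i‖^2) ≤ 9 := by
        have : ∀ i : Fin 3, ‖x i‖^2 ≤ 3 := by
          intro i
          have := habs i
          rw [Real.norm_eq_abs]
          nlinarith [abs_nonneg (x i)]
        calc (∑ i, ‖x i‖^2) ≤ ∑ _i : Fin 3, (3:ℝ) := Finset.sum_le_sum (fun i _ => this i)
          _ ≤ 9 := by simp; norm_num
      calc Real.sqrt (∑ i, ‖x i‖^2) ≤ Real.sqrt 9 := Real.sqrt_le_sqrt hsum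
        _ = 3 := by rw [show (9:ℝ) = 3^2 by norm_num, Real.sqrt_sq]; norm_num
    simpa [Metric.mem_closedBall] using this
  exact hb.isCompact_closure

lemma frontier_unitCube : frontier unitCube = closure unitCube \ unitCube :=
  isOpen_unitCube.frontier_eq

end Ex31

namespace Ex31V2
open Filter

/-- Key 1D second-derivative test at a left endpoint. -/
lemma L1 {δ : ℝ} (hδ : 0 < δ) {f F : ℝ → ℝ} (h0 : f 0 = 0)
    (hf : ∀ s ∈ Set.Icc (0:ℝ) δ, 0 ≤ f s)
    (hF : ∀ s ∈ Set.Icc (0:ℝ) δ, HasDerivWithinAt f (F s) (Set.Icc 0 δ) s)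
    (hF0 : F 0 = 0) {h : ℝ} (hh : HasDerivWithinAt F h (Set.Icc 0 δ) 0) :
    0 ≤ h := by
  by_contra hneg
  push_neg at hneg
  -- slopes of F tend to h < h/2 < 0
  have hslope : Filter.Tendsto (slope F 0) (nhdsWithin 0 (Set.Icc (0:ℝ) δ \ {0})) (nhds h) :=
    hasDerivWithinAt_iff_tendsto_slope.mp hh
  have hev : ∀ᶠ s in nhdsWithin 0 (Set.Icc (0:ℝ) δ \ {0}), slope F 0 s < h/2 :=
    hslope.eventually_lt_const (by linarith)
  rw [eventually_nhdsWithin_iff] at hev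
  rcases Metric.eventually_nhds_iff.mp hev with ⟨ε, hε, hball⟩
  set ε' : ℝ := min (ε/2) δ with hε'
  have hε'pos : 0 < ε' := lt_min (by linarith) hδ
  have hε'le : ε' ≤ δ := min_le_right _ _
  have hFneg : ∀ s ∈ Set.Ioc (0:ℝ) ε', F s < 0 := by
    intro s hs
    have hd : dist s 0 < ε := by
      rw [Real.dist_eq, sub_zero, abs_of_pos hs.1]
      calc s ≤ ε' := hs.2
        _ ≤ ε/2 := min_le_left _ _
        _ < ε := by linarith
    have hmem : s ∈ Set.Icc (0:ℝ) δ \ {0} :=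
      ⟨⟨hs.1.le, le_trans hs.2 hε'le⟩, by simp [ne_of_gt hs.1]⟩
    have := hball hd hmem
    rw [slope_def_field] at this
    have h2 : (F s - F 0) / (s - 0) < h/2 := by
      simpa [div_eq_inv_mul] using this
    rw [hF0, sub_zero, sub_zero] at h2
    have : F s < (h/2) * s := by
      rwa [div_lt_iff₀ hs.1] at h2
    nlinarith [hs.1]
  -- f is antitone on [0, ε']
  have hant : AntitoneOn f (Set.Icc (0:ℝ) ε') := by
    apply antitoneOn_of_deriv_nonpos (convex_Icc _ _)
    · exact fun s hs => ((hF s ⟨hs.1, le_trans hs.2 hε'le⟩).differentiableWithinAt).continuousWithinAt.mono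
        (Set.Icc_subset_Icc le_rfl hε'le)
    · intro s hs
      rw [interior_Icc] at hs
      have hda : HasDerivAt f (F s) s := by
        apply (hF s ⟨hs.1.le, le_trans hs.2.le hε'le⟩).hasDerivAt
        apply Icc_mem_nhds (by linarith [hs.1]) (by linarith [hs.2, hε'le])
      exact (hda.differentiableAt.differentiableWithinAt)
    · intro s hs
      rw [interior_Icc] at hs
      have hda : HasDerivAt f (F s) s := by
        apply (hF s ⟨hs.1.le, le_trans hs.2.le hε'le⟩).hasDerivAt
        apply Icc_mem_nhds (by linarith [hs.1]) (by linarith [hs.2, hε'le])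
      rw [hda.deriv]
      exact le_of_lt (hFneg s ⟨hs.1, hs.2.le⟩)
  -- hence f = 0 on [0, ε'], hence F = 0 on the interior, contradiction
  have hfzero : ∀ s ∈ Set.Icc (0:ℝ) ε', f s = 0 := by
    intro s hs
    have h1 : f s ≤ f 0 := hant ⟨le_rfl, hε'pos.le⟩ hs hs.1
    have h2 : 0 ≤ f s := hf s ⟨hs.1, le_trans hs.2 hε'le⟩
    rw [h0] at h1; linarith
  have hcontr : F (ε'/2) = 0 := by
    have hda : HasDerivAt f (F (ε'/2)) (ε'/2) := by
      apply (hF (ε'/2) ⟨by linarith, by linarith⟩).hasDerivAt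
      apply Icc_mem_nhds (by linarith) (by linarith)
    have hzero : f =ᶠ[nhds (ε'/2)] (fun _ => (0:ℝ)) := by
      have : Set.Icc (0:ℝ) ε' ∈ nhds (ε'/2) := Icc_mem_nhds (by linarith) (by linarith)
      filter_upwards [this] with s hs using hfzero s hs
    have hda0 : HasDerivAt (fun _ : ℝ => (0:ℝ)) (F (ε'/2)) (ε'/2) := by
      exact hda.congr_of_eventuallyEq hzero.symm
    have := hda0.deriv
    simpa using this.symm
  have := hFneg (ε'/2) ⟨by linarith, by linarith⟩
  rw [hcontr] at this
  exact lt_irrefl 0 this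

end Ex31V2

namespace Ex31V2
open Ex31

abbrev E3 := EuclideanSpace ℝ (Fin 3)

/-- within-gradient -/
def Du (u : E3 → ℝ) : E3 → E3 →L[ℝ] ℝ := fderivWithin ℝ u (closure unitCube)

/-- within-Hessian -/
def Hu (u : E3 → ℝ) : E3 → E3 →L[ℝ] E3 →L[ℝ] ℝ :=
  fderivWithin ℝ (Du u) (closure unitCube)

section CR
variable {u : E3 → ℝ}

lemma hDu_contDiff (hu : ContDiffOn ℝ 2 u (closure unitCube)) : ContDiffOn ℝ 1 (Du u) (closure unitCube) :=
  hu.fderivWithin uniqueDiffOn_K (by norm_num)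

lemma hu_hasDeriv (hu : ContDiffOn ℝ 2 u (closure unitCube)) : ∀ x ∈ closure unitCube, HasFDerivWithinAt u (Du u x) (closure unitCube) x :=
  fun x hx => ((hu.differentiableOn (by norm_num)) x hx).hasFDerivWithinAt

lemma hDu_hasDeriv (hu : ContDiffOn ℝ 2 u (closure unitCube)) : ∀ x ∈ closure unitCube,
    HasFDerivWithinAt (Du u) (Hu u x) (closure unitCube) x :=
  fun x hx => (((hDu_contDiff hu).differentiableOn (by norm_num)) x hx).hasFDerivWithinAt

lemma hHu_cont (hu : ContDiffOn ℝ 2 u (closure unitCube)) : ContinuousOn (Hu u) (closure unitCube) :=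
  (hDu_contDiff hu).continuousOn_fderivWithin uniqueDiffOn_K (by norm_num)

/-- chain rule, first order -/
lemma CR1 (hu : ContDiffOn ℝ 2 u (closure unitCube)) {x v : E3} {a b : ℝ} (hmap : Set.MapsTo (fun s : ℝ => x + s • v) (Set.Icc a b) (closure unitCube))
    {s : ℝ} (hs : s ∈ Set.Icc a b) :
    HasDerivWithinAt (fun s : ℝ => u (x + s • v)) (Du u (x + s • v) v) (Set.Icc a b) s := by
  have hγ : HasDerivWithinAt (fun s : ℝ => x + s • v) v (Set.Icc a b) s := by
    simpa using (((hasDerivWithinAt_id s (Set.Icc a b)).smul_const v).const_add x)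
  exact (hu_hasDeriv hu _ (hmap hs)).comp_hasDerivWithinAt s hγ hmap

/-- chain rule, second order -/
lemma CR2 (hu : ContDiffOn ℝ 2 u (closure unitCube)) {x v : E3} {a b : ℝ} (hmap : Set.MapsTo (fun s : ℝ => x + s • v) (Set.Icc a b) (closure unitCube))
    {s : ℝ} (hs : s ∈ Set.Icc a b) :
    HasDerivWithinAt (fun s : ℝ => Du u (x + s • v) v) (Hu u (x + s • v) v v) (Set.Icc a b) s := by
  have hγ : HasDerivWithinAt (fun s : ℝ => x + s • v) v (Set.Icc a b) s := by
    simpa using (((hasDerivWithinAt_id s (Set.Icc a b)).smul_const v).const_add x)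
  have h1 : HasDerivWithinAt (fun s : ℝ => Du u (x + s • v)) (Hu u (x + s • v) v) (Set.Icc a b) s :=
    (hDu_hasDeriv hu _ (hmap hs)).comp_hasDerivWithinAt s hγ hmap
  have h2 := (ContinuousLinearMap.apply ℝ ℝ v).hasFDerivAt.comp_hasDerivWithinAt s h1
  exact h2

end CR
end Ex31V2

namespace Ex31V2
open Ex31
section Vals
variable {u : E3 → ℝ}

lemma poly_hasDeriv (A B C s : ℝ) :
    HasDerivAt (fun t : ℝ => C + B*t + A*t^2) (B + 2*A*s) s := by
  have h := ((hasDerivAt_const s C).add ((hasDerivAt_id s).const_mul B)).add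
    ((hasDerivAt_pow 2 s).const_mul A)
  refine h.congr_deriv ?_
  push_cast [pow_one]
  ring

lemma lineVals (hu : ContDiffOn ℝ 2 u (closure unitCube)) {x v : E3} {δ A B C : ℝ} (hδ : 0 < δ)
    (hmap : Set.MapsTo (fun s : ℝ => x + s • v) (Set.Icc 0 δ) (closure unitCube))
    (hvals : ∀ s ∈ Set.Icc (0:ℝ) δ, u (x + s • v) = C + B*s + A*s^2) :
    Du u x v = B ∧ Hu u x v v = 2*A := by
  have h0mem : (0:ℝ) ∈ Set.Icc (0:ℝ) δ := ⟨le_rfl, hδ.le⟩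
  have key : ∀ s ∈ Set.Icc (0:ℝ) δ, Du u (x + s • v) v = B + 2*A*s := by
    intro s hs
    have h1 := CR1 hu hmap hs
    have h1' : HasDerivWithinAt (fun t : ℝ => C + B*t + A*t^2)
        (Du u (x + s • v) v) (Set.Icc 0 δ) s :=
      h1.congr (fun t ht => (hvals t ht).symm) ((hvals s hs).symm)
    have h2 : HasDerivWithinAt (fun t : ℝ => C + B*t + A*t^2)
        (B + 2*A*s) (Set.Icc 0 δ) s := (poly_hasDeriv A B C s).hasDerivWithinAt
    exact (h1'.derivWithin ((uniqueDiffOn_Icc hδ) s hs)).symm.trans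
      (h2.derivWithin ((uniqueDiffOn_Icc hδ) s hs))
  constructor
  · have := key 0 h0mem
    simpa using this
  · have h3 := CR2 hu hmap h0mem
    have h3' : HasDerivWithinAt (fun t : ℝ => B + 2*A*t)
        (Hu u (x + (0:ℝ) • v) v v) (Set.Icc 0 δ) 0 := by
      apply h3.congr (fun t ht => (key t ht).symm)
      rw [key 0 h0mem]
    have h4 : HasDerivWithinAt (fun t : ℝ => B + 2*A*t) (2*A) (Set.Icc 0 δ) 0 := by
      have : HasDerivAt (fun t : ℝ => B + 2*A*t) (2*A) 0 := by
        have := (hasDerivAt_id (0:ℝ)).const_mul (2*A)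
        have h' := this.const_add B
        simpa using h'
      exact this.hasDerivWithinAt
    have : Hu u (x + (0:ℝ) • v) v v = 2*A :=
      (h3'.derivWithin ((uniqueDiffOn_Icc hδ) 0 h0mem)).symm.trans
        (h4.derivWithin ((uniqueDiffOn_Icc hδ) 0 h0mem))
    simpa using this

lemma CVX (hu : ContDiffOn ℝ 2 u (closure unitCube))
    (hconv : ConvexOn ℝ (closure unitCube) u) :
    ∀ x ∈ unitCube, ∀ v : E3, 0 ≤ Hu u x v v := by
  intro x hx v
  rcases Metric.isOpen_iff.mp isOpen_unitCube x hx with ⟨ε, hε, hball⟩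
  set δ : ℝ := ε / (2 * (‖v‖ + 1)) with hδdef
  have hnv : 0 < ‖v‖ + 1 := by positivity
  have hδ : 0 < δ := by positivity
  have hmapgen : ∀ (w : E3), ‖w‖ ≤ ‖v‖ →
      Set.MapsTo (fun s : ℝ => x + s • w) (Set.Icc 0 δ) (closure unitCube) := by
    intro w hw s hs
    apply subset_closure
    apply hball
    rw [Metric.mem_ball, dist_eq_norm]
    have : ‖x + s • w - x‖ = |s| * ‖w‖ := by
      rw [add_sub_cancel_left, norm_smul, Real.norm_eq_abs]
    rw [this]
    have h1 : |s| ≤ δ := by rw [abs_of_nonneg hs.1]; exact hs.2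
    have h2 : |s| * ‖w‖ ≤ δ * (‖v‖+1) := by
      apply mul_le_mul h1 (by linarith) (norm_nonneg _) hδ.le
    have h3 : δ * (‖v‖+1) = ε/2 := by
      rw [hδdef]; field_simp
    rw [h3] at h2; linarith
  have hmv := hmapgen v le_rfl
  have hmnv := hmapgen (-v) (by simp)
  set f : ℝ → ℝ := fun s => u (x + s • v) + u (x + s • (-v)) - 2 * u x with hf
  set F : ℝ → ℝ := fun s => Du u (x + s • v) v + Du u (x + s • (-v)) (-v) with hF
  have hfnn : ∀ s ∈ Set.Icc (0:ℝ) δ, 0 ≤ f s := by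
    intro s hs
    have h1 := hmv hs
    have h2 := hmnv hs
    have hmid : (1/2 : ℝ) • (x + s • v) + (1/2 : ℝ) • (x + s • (-v)) = x := by
      module
    have := hconv.2 h1 h2 (by norm_num : (0:ℝ) ≤ 1/2) (by norm_num : (0:ℝ) ≤ 1/2) (by norm_num)
    rw [hmid] at this
    simp only [smul_eq_mul] at this
    simp only [hf]
    nlinarith [this]
  have hfd : ∀ s ∈ Set.Icc (0:ℝ) δ, HasDerivWithinAt f (F s) (Set.Icc 0 δ) s := by
    intro s hs
    exact ((CR1 hu hmv hs).add (CR1 hu hmnv hs)).sub_const (2 * u x)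
  have hF0 : F 0 = 0 := by
    simp [hF, map_neg]
  have hFd := (CR2 hu hmv ⟨le_rfl, hδ.le⟩).add (CR2 hu hmnv ⟨le_rfl, hδ.le⟩)
  have hf0 : f 0 = 0 := by
    simp only [hf, zero_smul, add_zero]
    ring
  have := L1 hδ hf0 hfnn hfd hF0 hFd
  simp only [zero_smul, add_zero, map_neg, ContinuousLinearMap.neg_apply, neg_neg] at this
  linarith

end Vals
end Ex31V2

namespace Ex31V2
open Ex31 Filter
section Pt5
variable {u : E3 → ℝ}

lemma closure_le {g h : E3 → ℝ} (hg : ContinuousOn g (closure unitCube))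
    (hh : ContinuousOn h (closure unitCube)) (hle : ∀ x ∈ unitCube, g x ≤ h x) :
    ∀ x ∈ closure unitCube, g x ≤ h x := by
  intro x hx
  haveI : (nhdsWithin x unitCube).NeBot := mem_closure_iff_nhdsWithin_neBot.mp hx
  have hgt : Filter.Tendsto g (nhdsWithin x unitCube) (nhds (g x)) :=
    (hg x hx).mono_left (nhdsWithin_mono x subset_closure)
  have hht : Filter.Tendsto h (nhdsWithin x unitCube) (nhds (h x)) :=
    (hh x hx).mono_left (nhdsWithin_mono x subset_closure)
  refine le_of_tendsto_of_tendsto hgt hht ?_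
  filter_upwards [self_mem_nhdsWithin] with y hy using hle y hy

lemma closure_eq {g h : E3 → ℝ} (hg : ContinuousOn g (closure unitCube))
    (hh : ContinuousOn h (closure unitCube)) (hle : ∀ x ∈ unitCube, g x = h x) :
    ∀ x ∈ closure unitCube, g x = h x := fun x hx =>
  le_antisymm (closure_le hg hh (fun y hy => (hle y hy).le) x hx)
    (closure_le hh hg (fun y hy => (hle y hy).ge) x hx)

lemma Hu_entry_cont (hu : ContDiffOn ℝ 2 u (closure unitCube)) (v w : E3) :
    ContinuousOn (fun x => Hu u x v w) (closure unitCube) :=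
  ((hHu_cont hu).clm_apply continuousOn_const).clm_apply continuousOn_const

lemma hu_hasDerivAt_interior (hu : ContDiffOn ℝ 2 u (closure unitCube))
    {x : E3} (hx : x ∈ unitCube) : HasFDerivAt u (Du u x) x :=
  (hu_hasDeriv hu x (subset_closure hx)).hasFDerivAt
    (Filter.mem_of_superset (isOpen_unitCube.mem_nhds hx) subset_closure)

lemma hDu_hasDerivAt_interior (hu : ContDiffOn ℝ 2 u (closure unitCube))
    {x : E3} (hx : x ∈ unitCube) : HasFDerivAt (Du u) (Hu u x) x :=
  (hDu_hasDeriv hu x (subset_closure hx)).hasFDerivAt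
    (Filter.mem_of_superset (isOpen_unitCube.mem_nhds hx) subset_closure)

lemma symm_interior (hu : ContDiffOn ℝ 2 u (closure unitCube))
    {x : E3} (hx : x ∈ unitCube) (v w : E3) : Hu u x v w = Hu u x w v := by
  have hf : ∀ᶠ y in nhds x, HasFDerivAt u (Du u y) y := by
    filter_upwards [isOpen_unitCube.mem_nhds hx] with y hy
    exact hu_hasDerivAt_interior hu hy
  exact second_derivative_symmetric_of_eventually hf (hDu_hasDerivAt_interior hu hx) v w

lemma hess_eq (hu : ContDiffOn ℝ 2 u (closure unitCube))
    {x : E3} (hx : x ∈ unitCube) (i j : Fin 3) :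
    hess3 u x i j = Hu u x (ee i) (ee j) := by
  have h1 : (fun y => fderiv ℝ u y (EuclideanSpace.single j 1))
      =ᶠ[nhds x] (fun y => Du u y (EuclideanSpace.single j 1)) := by
    filter_upwards [isOpen_unitCube.mem_nhds hx] with y hy
    have : fderivWithin ℝ u (closure unitCube) y = fderiv ℝ u y :=
      fderivWithin_of_mem_nhds (Filter.mem_of_superset (isOpen_unitCube.mem_nhds hy) subset_closure)
    rw [Du, this]
  have h2 : HasFDerivAt (fun y => Du u y (EuclideanSpace.single j 1))
      ((ContinuousLinearMap.apply ℝ ℝ (EuclideanSpace.single j (1:ℝ))).comp (Hu u x)) x :=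
    (ContinuousLinearMap.apply ℝ ℝ (EuclideanSpace.single j (1:ℝ))).hasFDerivAt.comp x
      (hDu_hasDerivAt_interior hu hx)
  rw [hess3, h1.fderiv_eq, h2.fderiv]
  rfl

lemma detD2_eq (hu : ContDiffOn ℝ 2 u (closure unitCube))
    {x : E3} (hx : x ∈ unitCube) :
    detD2₃ u x = (Matrix.of fun i j => Hu u x (ee i) (ee j)).det := by
  unfold detD2₃
  congr 1
  ext i j
  exact hess_eq hu hx i j

end Pt5
end Ex31V2

namespace Ex31V2
open Matrix

lemma psd_det_nonneg {M : Matrix (Fin 3) (Fin 3) ℝ} (h : M.PosSemidef) : 0 ≤ M.det := by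
  rw [h.1.det_eq_prod_eigenvalues]
  apply Finset.prod_nonneg
  intro i _
  simpa using h.eigenvalues_nonneg i

lemma key_det_aux (c00 c01 c02 c11 c12 c22 : ℝ)
    (hc : ∀ y0 y1 y2 : ℝ, 0 ≤ c00*y0^2 + c11*y1^2 + c22*y2^2
      + 2*c01*(y0*y1) + 2*c02*(y0*y2) + 2*c12*(y1*y2)) :
    0 ≤ (c00 + c11 + (3/4)*c22 + c01)
      + ((c11*c22 - c12^2) + (c00*c22 - c02^2) + (c01*c22 - c12*c02) + (c00*c11 - c01^2))
      + (c00*c11*c22 + 2*(c01*c12*c02) - c00*c12^2 - c11*c02^2 - c22*c01^2) := by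
  have hc00 : 0 ≤ c00 := by have := hc 1 0 0; nlinarith [this]
  have hc11 : 0 ≤ c11 := by have := hc 0 1 0; nlinarith [this]
  have hc22 : 0 ≤ c22 := by have := hc 0 0 1; nlinarith [this]
  have hZ : c01^2 ≤ c00 * c11 := by
    have h := discrim_le_zero (a := c00) (b := 2*c01) (c := c11) (fun x => by
      have := hc x 1 0; nlinarith [this])
    rw [discrim] at h; nlinarith [h]
  have hY : c02^2 ≤ c00 * c22 := by
    have h := discrim_le_zero (a := c00) (b := 2*c02) (c := c22) (fun x => by
      have := hc x 0 1; nlinarith [this])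
    rw [discrim] at h; nlinarith [h]
  have hX : c12^2 ≤ c11 * c22 := by
    have h := discrim_le_zero (a := c11) (b := 2*c12) (c := c22) (fun x => by
      have := hc 0 x 1; nlinarith [this])
    rw [discrim] at h; nlinarith [h]
  have hherm : (Matrix.of ![![c00,c01,c02], ![c01,c11,c12], ![c02,c12,c22]]).IsHermitian := by
    show Matrix.conjTranspose _ = _
    ext i j
    fin_cases i <;> fin_cases j <;> simp [Matrix.conjTranspose_apply]
  have hpsd : (Matrix.of ![![c00,c01,c02], ![c01,c11,c12], ![c02,c12,c22]]).PosSemidef := by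
    refine Matrix.PosSemidef.of_dotProduct_mulVec_nonneg hherm fun y => ?_
    have h := hc (y 0) (y 1) (y 2)
    have heq : dotProduct (star y)
        ((Matrix.of ![![c00,c01,c02], ![c01,c11,c12], ![c02,c12,c22]]).mulVec y)
        = c00*(y 0)^2 + c11*(y 1)^2 + c22*(y 2)^2
        + 2*c01*(y 0*y 1) + 2*c02*(y 0*y 2) + 2*c12*(y 1*y 2) := by
      simp [Matrix.mulVec, dotProduct, Fin.sum_univ_three]
      ring
    rw [heq]
    exact h
  have hdC : 0 ≤ c00*c11*c22 + 2*(c01*c12*c02) - c00*c12^2 - c11*c02^2 - c22*c01^2 := by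
    have h := psd_det_nonneg hpsd
    have he : (Matrix.of ![![c00,c01,c02], ![c01,c11,c12], ![c02,c12,c22]]).det
        = c00*c11*c22 + 2*(c01*c12*c02) - c00*c12^2 - c11*c02^2 - c22*c01^2 := by
      rw [Matrix.det_fin_three]
      simp
      ring
    rwa [he] at h
  have hT1 : 0 ≤ c00 + c11 + (3/4)*c22 + c01 := by
    nlinarith [hZ, hc00, hc11, hc22, sq_nonneg (c00 - c11), sq_nonneg (c00 + c11 + 2*c01)]
  have hW2 : (c01*c22 - c12*c02)^2 ≤ (c11*c22 - c12^2)*(c00*c22 - c02^2) := by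
    nlinarith [mul_nonneg hc22 hdC]
  have hT2 : 0 ≤ (c11*c22 - c12^2) + (c00*c22 - c02^2) + (c01*c22 - c12*c02) := by
    nlinarith [hW2, sq_nonneg ((c11*c22 - c12^2) - (c00*c22 - c02^2)),
      sq_nonneg ((c11*c22 - c12^2) + (c00*c22 - c02^2) + 2*(c01*c22 - c12*c02)),
      mul_nonneg (mul_nonneg hc11 hc22) (mul_nonneg hc00 hc22)]
  have hZ' : 0 ≤ c00*c11 - c01^2 := by linarith
  linarith [hT1, hT2, hdC, hZ']

lemma key_det (a00 a01 a02 a11 a12 a22 : ℝ)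
    (hq : ∀ y0 y1 y2 : ℝ, y0^2 + y1^2 + y2^2 - y0*y1 ≤
      a00*y0^2 + a11*y1^2 + a22*y2^2 + 2*a01*(y0*y1) + 2*a02*(y0*y2) + 2*a12*(y1*y2)) :
    (3:ℝ)/4 ≤ a00*(a11*a22 - a12*a12) - a01*(a01*a22 - a12*a02) + a02*(a01*a12 - a11*a02) := by
  have hc : ∀ y0 y1 y2 : ℝ, 0 ≤ (a00-1)*y0^2 + (a11-1)*y1^2 + (a22-1)*y2^2
      + 2*(a01+1/2)*(y0*y1) + 2*a02*(y0*y2) + 2*a12*(y1*y2) := by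
    intro y0 y1 y2
    nlinarith [hq y0 y1 y2]
  have h := key_det_aux (a00-1) (a01+1/2) a02 (a11-1) a12 (a22-1) hc
  nlinarith [h]

end Ex31V2

namespace Ex31V2
open Ex31 Filter

def Pf : E3 → ℝ := fun x => (x 0 ^ 2 + x 1 ^ 2 + x 2 ^ 2) / 2 - x 0 * x 1 / 2

def PL (x v : E3) : ℝ := x 0 * v 0 + x 1 * v 1 + x 2 * v 2 - (x 0 * v 1 + x 1 * v 0)/2

def PQ (v : E3) : ℝ := (v 0 ^ 2 + v 1 ^ 2 + v 2 ^ 2)/2 - v 0 * v 1/2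

lemma Pf_expand (x v : E3) (s : ℝ) :
    Pf (x + s • v) = Pf x + s * PL x v + s^2 * PQ v := by
  simp only [Pf, PL, PQ, PiLp.add_apply, PiLp.smul_apply, smul_eq_mul]
  ring

lemma cont_coord (i : Fin 3) : Continuous fun x : E3 => x i :=
  (EuclideanSpace.proj (𝕜 := ℝ) i).continuous

lemma Pf_cont : Continuous Pf := by
  unfold Pf
  exact ((((cont_coord 0).pow 2).add ((cont_coord 1).pow 2)).add
    ((cont_coord 2).pow 2)).div_const 2 |>.sub
    (((cont_coord 0).mul (cont_coord 1)).div_const 2)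

section StepA
variable {u f : E3 → ℝ}

/-- second-derivative bound at an interior minimum of `u - Pf`. -/
lemma min_hess (hu : ContDiffOn ℝ 2 u (closure unitCube)) {z : E3} (hz : z ∈ unitCube)
    (hmin : IsMinOn (fun x => u x - Pf x) (closure unitCube) z) (v : E3) :
    2 * PQ v ≤ Hu u z v v := by
  rcases Metric.isOpen_iff.mp isOpen_unitCube z hz with ⟨ε, hε, hball⟩
  set δ : ℝ := ε / (2 * (‖v‖ + 1)) with hδdef
  have hnv : 0 < ‖v‖ + 1 := by positivity
  have hδ : 0 < δ := by positivity
  have hmap : Set.MapsTo (fun s : ℝ => z + s • v) (Set.Icc (-δ) δ) (closure unitCube) := by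
    intro s hs
    apply subset_closure
    apply hball
    rw [Metric.mem_ball, dist_eq_norm]
    have h1 : ‖z + s • v - z‖ = |s| * ‖v‖ := by
      rw [add_sub_cancel_left, norm_smul, Real.norm_eq_abs]
    rw [h1]
    have h2 : |s| ≤ δ := abs_le.mpr ⟨hs.1, hs.2⟩
    have h3 : |s| * ‖v‖ ≤ δ * (‖v‖+1) :=
      mul_le_mul h2 (by linarith) (norm_nonneg _) hδ.le
    have h4 : δ * (‖v‖+1) = ε/2 := by rw [hδdef]; field_simp
    rw [h4] at h3; linarith
  set w : E3 → ℝ := fun x => u x - Pf x with hw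
  set g : ℝ → ℝ := fun s => w (z + s • v) - w z with hg
  set G : ℝ → ℝ := fun s => Du u (z + s • v) v - (PL z v + 2 * PQ v * s) with hG
  have hgd : ∀ s ∈ Set.Icc (-δ) δ, HasDerivWithinAt g (G s) (Set.Icc (-δ) δ) s := by
    intro s hs
    have h1 := CR1 hu hmap hs
    have h2 : HasDerivWithinAt (fun t : ℝ => Pf (z + t • v) + w z)
        (PL z v + 2 * PQ v * s) (Set.Icc (-δ) δ) s := by
      have h3 : HasDerivAt (fun t : ℝ => (Pf z + w z) + (PL z v) * t + (PQ v) * t^2)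
          (PL z v + 2 * (PQ v) * s) s := poly_hasDeriv _ _ _ s
      have h4 : (fun t : ℝ => Pf (z + t • v) + w z)
          = fun t : ℝ => (Pf z + w z) + (PL z v) * t + (PQ v) * t^2 := by
        funext t
        rw [Pf_expand]
        ring
      rw [h4]
      exact h3.hasDerivWithinAt
    have := h1.sub h2
    have hfun : g = (fun s : ℝ => u (z + s • v)) - fun t => Pf (z + t • v) + w z := by
      funext t; simp only [hg, hw, Pi.sub_apply]; ring
    rw [hfun]; exact this
  have hglower : ∀ s ∈ Set.Icc (-δ) δ, 0 ≤ g s := by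
    intro s hs
    have := hmin (hmap hs)
    simp only [hg, hw] at *
    simpa using this
  have hG0 : G 0 = 0 := by
    have hloc : IsLocalMin g 0 := by
      have hmem : Set.Icc (-δ) δ ∈ nhds (0:ℝ) := Icc_mem_nhds (by linarith) hδ
      have h0 : g 0 = 0 := by simp [hg]
      apply Filter.eventually_iff_exists_mem.mpr ⟨Set.Icc (-δ) δ, hmem, ?_⟩ -- IsLocalMin g 0 : ∀ᶠ y, g 0 ≤ g y
      intro s hs
      rw [h0]
      exact hglower s hs
    have hda : HasDerivAt g (G 0) 0 :=
      (hgd 0 ⟨by linarith, hδ.le⟩).hasDerivAt (Icc_mem_nhds (by linarith) hδ)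
    exact hloc.hasDerivAt_eq_zero hda
  -- restrict to [0, δ] and apply L1
  have hsub : Set.Icc (0:ℝ) δ ⊆ Set.Icc (-δ) δ := Set.Icc_subset_Icc (by linarith) le_rfl
  have hgd' : ∀ s ∈ Set.Icc (0:ℝ) δ, HasDerivWithinAt g (G s) (Set.Icc 0 δ) s :=
    fun s hs => (hgd s (hsub hs)).mono hsub
  have hGd : HasDerivWithinAt G (Hu u z v v - 2 * PQ v) (Set.Icc 0 δ) 0 := by
    have h1 := (CR2 hu hmap ⟨le_of_lt (by linarith : (-δ) < 0), hδ.le⟩).mono hsub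
    have h2 : HasDerivWithinAt (fun s : ℝ => PL z v + 2 * PQ v * s) (2 * PQ v) (Set.Icc (0:ℝ) δ) 0 := by
      have := ((hasDerivAt_id (0:ℝ)).const_mul (2 * PQ v)).const_add (PL z v)
      simpa using this.hasDerivWithinAt
    have := h1.sub h2
    simp only [zero_smul, add_zero] at this
    exact this
  have hg0 : g 0 = 0 := by simp [hg]
  have := L1 hδ hg0 (fun s hs => hglower s (hsub hs)) hgd' hG0 hGd
  linarith

end StepA
end Ex31V2

namespace Ex31V2
open Ex31 Filter

lemma coord_combo (y0 y1 y2 : ℝ) (i : Fin 3) :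
    (y0 • ee 0 + y1 • ee 1 + y2 • ee 2 : E3) i = ![y0, y1, y2] i := by
  fin_cases i <;>
    simp [ee, PiLp.add_apply, PiLp.smul_apply, EuclideanSpace.single_apply, smul_eq_mul]

lemma PQ_combo (y0 y1 y2 : ℝ) :
    PQ (y0 • ee 0 + y1 • ee 1 + y2 • ee 2 : E3) = (y0^2 + y1^2 + y2^2)/2 - y0*y1/2 := by
  have h0 := coord_combo y0 y1 y2 0
  have h1 := coord_combo y0 y1 y2 1
  have h2 := coord_combo y0 y1 y2 2
  simp only [PQ, h0, h1, h2]
  norm_num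
  rfl

lemma expand_B (B : E3 →L[ℝ] E3 →L[ℝ] ℝ) (y0 y1 y2 : ℝ) :
    B (y0 • ee 0 + y1 • ee 1 + y2 • ee 2) (y0 • ee 0 + y1 • ee 1 + y2 • ee 2)
    = y0*y0*(B (ee 0) (ee 0)) + y0*y1*(B (ee 0) (ee 1)) + y0*y2*(B (ee 0) (ee 2))
    + y1*y0*(B (ee 1) (ee 0)) + y1*y1*(B (ee 1) (ee 1)) + y1*y2*(B (ee 1) (ee 2))
    + y2*y0*(B (ee 2) (ee 0)) + y2*y1*(B (ee 2) (ee 1)) + y2*y2*(B (ee 2) (ee 2)) := by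
  simp only [map_add, map_smul, ContinuousLinearMap.add_apply, ContinuousLinearMap.coe_smul',
    Pi.smul_apply, smul_eq_mul]
  ring

section StepA2
variable {u f : E3 → ℝ}

lemma not_vertex_of_interior {z : E3} (hz : z ∈ unitCube) : ¬ IsCubeVertex z := by
  intro h
  have h0 := hz 0
  rcases h 0 with h' | h' <;> rw [h'] at h0 <;>
    simp [Set.mem_Ioo] at h0

lemma u_ge_Pf (hu : ContDiffOn ℝ 2 u (closure unitCube))
    (hbd : ∀ x ∈ frontier unitCube, u x = Pf x)
    (hdet : ∀ x ∈ unitCube, detD2₃ u x = f x)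
    (hfin : ∀ x ∈ closure unitCube, ¬ IsCubeVertex x → 0 < f x ∧ f x < 3/4) :
    ∀ x ∈ closure unitCube, Pf x ≤ u x := by
  by_contra hcon
  push_neg at hcon
  obtain ⟨y, hy, hylt⟩ := hcon
  have hwcont : ContinuousOn (fun x => u x - Pf x) (closure unitCube) :=
    (hu.continuousOn).sub Pf_cont.continuousOn
  obtain ⟨z, hzK, hmin⟩ := isCompact_K.exists_isMinOn ⟨y, hy⟩ hwcont
  have hzneg : u z - Pf z < 0 := lt_of_le_of_lt (hmin hy) (by dsimp; linarith)
  have hzin : z ∈ unitCube := by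
    by_contra h
    have hfr : z ∈ frontier unitCube := by
      rw [frontier_unitCube]; exact ⟨hzK, h⟩
    have := hbd z hfr
    linarith
  have hflt : f z < 3/4 := (hfin z hzK (not_vertex_of_interior hzin)).2
  have hq : ∀ y0 y1 y2 : ℝ, y0^2 + y1^2 + y2^2 - y0*y1 ≤
      (Hu u z (ee 0) (ee 0))*y0^2 + (Hu u z (ee 1) (ee 1))*y1^2 + (Hu u z (ee 2) (ee 2))*y2^2
      + 2*(Hu u z (ee 0) (ee 1))*(y0*y1) + 2*(Hu u z (ee 0) (ee 2))*(y0*y2)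
      + 2*(Hu u z (ee 1) (ee 2))*(y1*y2) := by
    intro y0 y1 y2
    have h := min_hess hu hzin hmin (y0 • ee 0 + y1 • ee 1 + y2 • ee 2)
    rw [PQ_combo, expand_B] at h
    have s01 := symm_interior hu hzin (ee 0) (ee 1)
    have s02 := symm_interior hu hzin (ee 0) (ee 2)
    have s12 := symm_interior hu hzin (ee 1) (ee 2)
    rw [← s01, ← s02, ← s12] at h
    nlinarith [h]
  have hk := key_det _ _ _ _ _ _ hq
  have hdetz : detD2₃ u z =
      (Hu u z (ee 0) (ee 0))*((Hu u z (ee 1) (ee 1))*(Hu u z (ee 2) (ee 2))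
        - (Hu u z (ee 1) (ee 2))*(Hu u z (ee 1) (ee 2)))
      - (Hu u z (ee 0) (ee 1))*((Hu u z (ee 0) (ee 1))*(Hu u z (ee 2) (ee 2))
        - (Hu u z (ee 1) (ee 2))*(Hu u z (ee 0) (ee 2)))
      + (Hu u z (ee 0) (ee 2))*((Hu u z (ee 0) (ee 1))*(Hu u z (ee 1) (ee 2))
        - (Hu u z (ee 1) (ee 1))*(Hu u z (ee 0) (ee 2))) := by
    rw [detD2_eq hu hzin, Matrix.det_fin_three]
    have s10 := symm_interior hu hzin (ee 1) (ee 0)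
    have s20 := symm_interior hu hzin (ee 2) (ee 0)
    have s21 := symm_interior hu hzin (ee 2) (ee 1)
    simp only [Matrix.of_apply]
    rw [s10, s20, s21]
    ring
  have := hdet z hzin
  rw [hdetz] at this
  linarith [hk, hflt, this.symm.le, this.le]

end StepA2
end Ex31V2

namespace Ex31V2
open Ex31 Filter

def pt (t : ℝ) : E3 := t • ee 2

lemma mem_frontier_of (x : E3) (h : ∀ i, x i ∈ Set.Icc (0:ℝ) 1) (i0 : Fin 3)
    (h0 : x i0 = 0) : x ∈ frontier unitCube := by
  rw [frontier_unitCube]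
  refine ⟨mem_closure_unitCube.mpr h, fun hc => ?_⟩
  have := (hc i0).1
  rw [h0] at this
  exact lt_irrefl 0 this

lemma frontier_subset_K : frontier unitCube ⊆ closure unitCube := by
  rw [frontier_unitCube]; exact Set.diff_subset

section Edge
variable {u f : E3 → ℝ} {t : ℝ}

lemma pt_mem_frontier (ht : t ∈ Set.Icc (0:ℝ) (1/2)) : pt t ∈ frontier unitCube := by
  refine mem_frontier_of _ (fun i => ?_) 0 ?_
  · fin_cases i <;>
      simp [pt, ee, PiLp.smul_apply, EuclideanSpace.single_apply, smul_eq_mul, Set.mem_Icc] <;>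
      constructor <;> linarith [ht.1, ht.2]
  · simp [pt, ee, PiLp.smul_apply, EuclideanSpace.single_apply, smul_eq_mul]

/-- generic face-line second derivative identities -/
lemma face_line (hu : ContDiffOn ℝ 2 u (closure unitCube))
    (hbd : ∀ x ∈ frontier unitCube, u x = Pf x) {v : E3}
    (hmapF : Set.MapsTo (fun s : ℝ => pt t + s • v) (Set.Icc 0 (1/4)) (frontier unitCube)) :
    Du u (pt t) v = PL (pt t) v ∧ Hu u (pt t) v v = 2 * PQ v := by
  apply lineVals hu (by norm_num : (0:ℝ) < 1/4)
    (fun s hs => frontier_subset_K (hmapF hs))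
  intro s hs
  rw [hbd _ (hmapF hs), Pf_expand]
  ring

lemma map_e0 (ht : t ∈ Set.Icc (0:ℝ) (1/2)) :
    Set.MapsTo (fun s : ℝ => pt t + s • ee 0) (Set.Icc 0 (1/4)) (frontier unitCube) := by
  intro s hs
  refine mem_frontier_of _ (fun i => ?_) 1 ?_
  · fin_cases i <;>
      simp [pt, ee, PiLp.add_apply, PiLp.smul_apply, EuclideanSpace.single_apply,
        smul_eq_mul, Set.mem_Icc] <;>
      constructor <;> linarith [ht.1, ht.2, hs.1, hs.2]
  · simp [pt, ee, PiLp.add_apply, PiLp.smul_apply, EuclideanSpace.single_apply, smul_eq_mul]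

lemma map_e1 (ht : t ∈ Set.Icc (0:ℝ) (1/2)) :
    Set.MapsTo (fun s : ℝ => pt t + s • ee 1) (Set.Icc 0 (1/4)) (frontier unitCube) := by
  intro s hs
  refine mem_frontier_of _ (fun i => ?_) 0 ?_
  · fin_cases i <;>
      simp [pt, ee, PiLp.add_apply, PiLp.smul_apply, EuclideanSpace.single_apply,
        smul_eq_mul, Set.mem_Icc] <;>
      constructor <;> linarith [ht.1, ht.2, hs.1, hs.2]
  · simp [pt, ee, PiLp.add_apply, PiLp.smul_apply, EuclideanSpace.single_apply, smul_eq_mul]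

lemma map_e2 (ht : t ∈ Set.Icc (0:ℝ) (1/2)) :
    Set.MapsTo (fun s : ℝ => pt t + s • ee 2) (Set.Icc 0 (1/4)) (frontier unitCube) := by
  intro s hs
  refine mem_frontier_of _ (fun i => ?_) 0 ?_
  · fin_cases i <;>
      simp [pt, ee, PiLp.add_apply, PiLp.smul_apply, EuclideanSpace.single_apply,
        smul_eq_mul, Set.mem_Icc] <;>
      constructor <;> linarith [ht.1, ht.2, hs.1, hs.2]
  · simp [pt, ee, PiLp.add_apply, PiLp.smul_apply, EuclideanSpace.single_apply, smul_eq_mul]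

lemma map_e02 (ht : t ∈ Set.Icc (0:ℝ) (1/2)) :
    Set.MapsTo (fun s : ℝ => pt t + s • (ee 0 + ee 2)) (Set.Icc 0 (1/4)) (frontier unitCube) := by
  intro s hs
  refine mem_frontier_of _ (fun i => ?_) 1 ?_
  · fin_cases i <;>
      simp [pt, ee, PiLp.add_apply, PiLp.smul_apply, EuclideanSpace.single_apply,
        smul_eq_mul, Set.mem_Icc] <;>
      constructor <;> linarith [ht.1, ht.2, hs.1, hs.2]
  · simp [pt, ee, PiLp.add_apply, PiLp.smul_apply, EuclideanSpace.single_apply, smul_eq_mul]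

lemma map_e12 (ht : t ∈ Set.Icc (0:ℝ) (1/2)) :
    Set.MapsTo (fun s : ℝ => pt t + s • (ee 1 + ee 2)) (Set.Icc 0 (1/4)) (frontier unitCube) := by
  intro s hs
  refine mem_frontier_of _ (fun i => ?_) 0 ?_
  · fin_cases i <;>
      simp [pt, ee, PiLp.add_apply, PiLp.smul_apply, EuclideanSpace.single_apply,
        smul_eq_mul, Set.mem_Icc] <;>
      constructor <;> linarith [ht.1, ht.2, hs.1, hs.2]
  · simp [pt, ee, PiLp.add_apply, PiLp.smul_apply, EuclideanSpace.single_apply, smul_eq_mul]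

lemma map_e01_vertex :
    Set.MapsTo (fun s : ℝ => pt 0 + s • (ee 0 + ee 1)) (Set.Icc 0 (1/4)) (frontier unitCube) := by
  intro s hs
  refine mem_frontier_of _ (fun i => ?_) 2 ?_
  · fin_cases i <;>
      simp [pt, ee, PiLp.add_apply, PiLp.smul_apply, EuclideanSpace.single_apply,
        smul_eq_mul, Set.mem_Icc] <;>
      constructor <;> linarith [hs.1, hs.2]
  · simp [pt, ee, PiLp.add_apply, PiLp.smul_apply, EuclideanSpace.single_apply, smul_eq_mul]

lemma map_e01_K (ht : t ∈ Set.Icc (0:ℝ) (1/2)) :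
    Set.MapsTo (fun s : ℝ => pt t + s • (ee 0 + ee 1)) (Set.Icc 0 (1/4)) (closure unitCube) := by
  intro s hs
  apply mem_closure_unitCube.mpr
  intro i
  fin_cases i <;>
    simp [pt, ee, PiLp.add_apply, PiLp.smul_apply, EuclideanSpace.single_apply,
      smul_eq_mul, Set.mem_Icc] <;>
    constructor <;> linarith [ht.1, ht.2, hs.1, hs.2]

end Edge
end Ex31V2

namespace Ex31V2
open Ex31 Filter

lemma expand2 (B : E3 →L[ℝ] E3 →L[ℝ] ℝ) (x y : E3) :
    B (x + y) (x + y) = B x x + B x y + B y x + B y y := by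
  simp only [map_add, ContinuousLinearMap.add_apply]
  ring

lemma PL_pt (t : ℝ) (v : E3) : PL (pt t) v = t * v 2 := by
  simp [PL, pt, ee, PiLp.smul_apply, EuclideanSpace.single_apply, smul_eq_mul]

lemma PQ_e0 : PQ (ee 0) = 1/2 := by
  simp [PQ, ee, EuclideanSpace.single_apply]
lemma PQ_e1 : PQ (ee 1) = 1/2 := by
  simp [PQ, ee, EuclideanSpace.single_apply]
lemma PQ_e2 : PQ (ee 2) = 1/2 := by
  simp [PQ, ee, EuclideanSpace.single_apply]
lemma PQ_e02 : PQ (ee 0 + ee 2) = 1 := by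
  simp [PQ, ee, PiLp.add_apply, EuclideanSpace.single_apply]
lemma PQ_e12 : PQ (ee 1 + ee 2) = 1 := by
  simp [PQ, ee, PiLp.add_apply, EuclideanSpace.single_apply]
lemma PQ_e01 : PQ (ee 0 + ee 1) = 1/2 := by
  simp [PQ, ee, PiLp.add_apply, EuclideanSpace.single_apply]
  norm_num
lemma e_coord_2_0 : (ee 0 : E3) 2 = 0 := by simp [ee, EuclideanSpace.single_apply]
lemma e_coord_2_1 : (ee 1 : E3) 2 = 0 := by simp [ee, EuclideanSpace.single_apply]
lemma e01_coord_2 : ((ee 0 + ee 1 : E3)) 2 = 0 := by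
  simp [ee, PiLp.add_apply, EuclideanSpace.single_apply]

section Edge2
variable {u f : E3 → ℝ} {t : ℝ}

lemma edge_ids (hu : ContDiffOn ℝ 2 u (closure unitCube))
    (hbd : ∀ x ∈ frontier unitCube, u x = Pf x) (ht : t ∈ Set.Icc (0:ℝ) (1/2)) :
    Hu u (pt t) (ee 0) (ee 0) = 1 ∧ Hu u (pt t) (ee 1) (ee 1) = 1 ∧
    Hu u (pt t) (ee 2) (ee 2) = 1 ∧
    Hu u (pt t) (ee 2) (ee 0) = - Hu u (pt t) (ee 0) (ee 2) ∧
    Hu u (pt t) (ee 2) (ee 1) = - Hu u (pt t) (ee 1) (ee 2) ∧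
    Du u (pt t) (ee 0) = 0 ∧ Du u (pt t) (ee 1) = 0 := by
  have h00 := (face_line hu hbd (map_e0 ht))
  have h11 := (face_line hu hbd (map_e1 ht))
  have h22 := (face_line hu hbd (map_e2 ht))
  have h02 := (face_line hu hbd (map_e02 ht)).2
  have h12 := (face_line hu hbd (map_e12 ht)).2
  rw [PQ_e0] at h00; rw [PQ_e1] at h11; rw [PQ_e2] at h22
  rw [PQ_e02, expand2] at h02; rw [PQ_e12, expand2] at h12
  have e00 : Hu u (pt t) (ee 0) (ee 0) = 1 := by rw [h00.2]; norm_num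
  have e11 : Hu u (pt t) (ee 1) (ee 1) = 1 := by rw [h11.2]; norm_num
  have e22 : Hu u (pt t) (ee 2) (ee 2) = 1 := by rw [h22.2]; norm_num
  refine ⟨e00, e11, e22, ?_, ?_, ?_, ?_⟩
  · rw [e00, e22] at h02; linarith
  · rw [e11, e22] at h12; linarith
  · rw [h00.1, PL_pt, e_coord_2_0]; ring
  · rw [h11.1, PL_pt, e_coord_2_1]; ring

lemma vertex_id (hu : ContDiffOn ℝ 2 u (closure unitCube))
    (hbd : ∀ x ∈ frontier unitCube, u x = Pf x) :
    Hu u (pt 0) (ee 0) (ee 1) + Hu u (pt 0) (ee 1) (ee 0) = -1 := by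
  have h := (face_line hu hbd map_e01_vertex).2
  rw [PQ_e01, expand2] at h
  have hids := edge_ids hu hbd (by norm_num : (0:ℝ) ∈ Set.Icc (0:ℝ) (1/2))
  rw [hids.1, hids.2.1] at h
  linarith

lemma quadrant (hu : ContDiffOn ℝ 2 u (closure unitCube))
    (hbd : ∀ x ∈ frontier unitCube, u x = Pf x)
    (hgeP : ∀ x ∈ closure unitCube, Pf x ≤ u x) (ht : t ∈ Set.Icc (0:ℝ) (1/2)) :
    1 ≤ Hu u (pt t) (ee 0 + ee 1) (ee 0 + ee 1) := by
  set v : E3 := ee 0 + ee 1 with hv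
  have hmap := map_e01_K ht
  have hPLv : PL (pt t) v = 0 := by rw [PL_pt, hv, e01_coord_2]; ring
  set g : ℝ → ℝ := fun s => u (pt t + s • v) - (Pf (pt t) + s * PL (pt t) v + s^2 * PQ v)
    with hg
  set G : ℝ → ℝ := fun s => Du u (pt t + s • v) v - (PL (pt t) v + 2 * PQ v * s) with hG
  have hgd : ∀ s ∈ Set.Icc (0:ℝ) (1/4), HasDerivWithinAt g (G s) (Set.Icc 0 (1/4)) s := by
    intro s hs
    have h1 := CR1 hu hmap hs
    have h2 : HasDerivWithinAt
        (fun s : ℝ => Pf (pt t) + s * PL (pt t) v + s^2 * PQ v)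
        (PL (pt t) v + 2 * PQ v * s) (Set.Icc (0:ℝ) (1/4)) s := by
      have h3 := poly_hasDeriv (PQ v) (PL (pt t) v) (Pf (pt t)) s
      have h4 : (fun s : ℝ => Pf (pt t) + s * PL (pt t) v + s^2 * PQ v)
          = fun s : ℝ => Pf (pt t) + (PL (pt t) v) * s + (PQ v) * s^2 := by
        funext s; ring
      rw [h4]
      exact h3.hasDerivWithinAt
    exact h1.sub h2
  have hgnn : ∀ s ∈ Set.Icc (0:ℝ) (1/4), 0 ≤ g s := by
    intro s hs
    have h1 := hgeP _ (hmap hs)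
    have h2 : Pf (pt t + s • v) = Pf (pt t) + s * PL (pt t) v + s^2 * PQ v := Pf_expand _ _ _
    simp only [hg]
    rw [← h2]
    linarith
  have hg0 : g 0 = 0 := by
    have h1 : u (pt t) = Pf (pt t) := hbd _ (pt_mem_frontier ht)
    simp [hg, h1]
  have hG0 : G 0 = 0 := by
    have hids := edge_ids hu hbd ht
    simp only [hG]
    have : Du u (pt t + (0:ℝ) • v) v = Du u (pt t) v := by norm_num
    rw [this, hv, map_add, hids.2.2.2.2.2.1, hids.2.2.2.2.2.2, hPLv]
    norm_num
  have hGd : HasDerivWithinAt G (Hu u (pt t) v v - 2 * PQ v) (Set.Icc (0:ℝ) (1/4)) 0 := by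
    have h1 := CR2 hu hmap (by norm_num : (0:ℝ) ∈ Set.Icc (0:ℝ) (1/4))
    have h2 : HasDerivWithinAt (fun s : ℝ => PL (pt t) v + 2 * PQ v * s) (2 * PQ v)
        (Set.Icc (0:ℝ) (1/4)) 0 := by
      have := ((hasDerivAt_id (0:ℝ)).const_mul (2 * PQ v)).const_add (PL (pt t) v)
      simpa using this.hasDerivWithinAt
    have h3 := h1.sub h2
    have h4 : pt t + (0:ℝ) • v = pt t := by norm_num
    rw [h4] at h3
    exact h3
  have := L1 (by norm_num : (0:ℝ) < 1/4) hg0 hgnn hgd hG0 hGd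
  rw [hv] at *
  rw [PQ_e01] at this
  linarith

end Edge2
end Ex31V2

namespace Ex31V2
open Ex31 Filter

lemma expand2m (B : E3 →L[ℝ] E3 →L[ℝ] ℝ) (x y : E3) :
    B (x - y) (x - y) = B x x - B x y - B y x + B y y := by
  simp only [map_sub, ContinuousLinearMap.sub_apply]
  ring

section Final
variable {u f : E3 → ℝ}

lemma hu_psd_K (hu : ContDiffOn ℝ 2 u (closure unitCube))
    (hconv : ConvexOn ℝ (closure unitCube) u) (v : E3) :
    ∀ x ∈ closure unitCube, 0 ≤ Hu u x v v := by
  have := closure_le (g := fun _ => (0:ℝ)) (h := fun x => Hu u x v v)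
    continuousOn_const (Hu_entry_cont hu v v) (fun x hx => CVX hu hconv x hx v)
  exact this

def detE (u : E3 → ℝ) : E3 → ℝ := fun x =>
  (Hu u x (ee 0) (ee 0))*((Hu u x (ee 1) (ee 1))*(Hu u x (ee 2) (ee 2))
      - (Hu u x (ee 1) (ee 2))*(Hu u x (ee 2) (ee 1)))
  - (Hu u x (ee 0) (ee 1))*((Hu u x (ee 1) (ee 0))*(Hu u x (ee 2) (ee 2))
      - (Hu u x (ee 1) (ee 2))*(Hu u x (ee 2) (ee 0)))
  + (Hu u x (ee 0) (ee 2))*((Hu u x (ee 1) (ee 0))*(Hu u x (ee 2) (ee 1))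
      - (Hu u x (ee 1) (ee 1))*(Hu u x (ee 2) (ee 0)))

lemma detE_cont (hu : ContDiffOn ℝ 2 u (closure unitCube)) :
    ContinuousOn (detE u) (closure unitCube) := by
  unfold detE
  have h := fun i j => Hu_entry_cont hu (ee i) (ee j)
  exact(((h 0 0).mul (((h 1 1).mul (h 2 2)).sub ((h 1 2).mul (h 2 1)))).sub
    ((h 0 1).mul (((h 1 0).mul (h 2 2)).sub ((h 1 2).mul (h 2 0))))).add
    ((h 0 2).mul (((h 1 0).mul (h 2 1)).sub ((h 1 1).mul (h 2 0))))

lemma detE_eq_f (hu : ContDiffOn ℝ 2 u (closure unitCube))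
    (hfc : ContinuousOn f (closure unitCube))
    (hdet : ∀ x ∈ unitCube, detD2₃ u x = f x) :
    ∀ x ∈ closure unitCube, detE u x = f x := by
  apply closure_eq (detE_cont hu) hfc
  intro x hx
  rw [← hdet x hx, detD2_eq hu hx, Matrix.det_fin_three]
  simp only [Matrix.of_apply]
  unfold detE
  ring

lemma bpos_lemma {b b' c d fv : ℝ} (hσ1 : -1 ≤ b + b') (hσ2 : b + b' ≤ 2)
    (hdet : 1 + c^2 + d^2 - b*b' - c*d*(b+b') = fv) (hfv : fv < 3/4) : 0 < b := by
  have hcd : 0 ≤ c^2 + d^2 + c*d := by nlinarith [sq_nonneg (c+d), sq_nonneg c, sq_nonneg d]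
  have h1 : 1/4 < b*b' := by
    nlinarith [mul_nonneg (by linarith : (0:ℝ) ≤ 2 - (b+b')) hcd,
      mul_nonneg (by linarith : (0:ℝ) ≤ (b+b') + 1) (sq_nonneg (c - d))]
  by_contra hble
  push_neg at hble
  have hbneg : b < 0 := by
    rcases lt_or_eq_of_le hble with h | h
    · exact h
    · exfalso; rw [h] at h1; norm_num at h1
  have hb'neg : b' < 0 := by nlinarith [h1, hbneg]
  nlinarith [sq_nonneg (b - b'), h1,
    mul_nonneg (by linarith : (0:ℝ) ≤ b + b' + 1) (by linarith : (0:ℝ) ≤ -(b+b'))]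

lemma b_at_vertex {b b' c d : ℝ} (hσ : b + b' = -1)
    (hdet : 1 + c^2 + d^2 - b*b' - c*d*(b+b') = 3/4) : b = -1/2 := by
  have hcd : 0 ≤ c^2 + d^2 + c*d := by nlinarith [sq_nonneg (c+d), sq_nonneg c, sq_nonneg d]
  have h1 : (b - b')^2 ≤ 0 := by nlinarith [hcd]
  have h3 : (b - b')^2 = 0 := le_antisymm h1 (sq_nonneg _)
  have h4 : b - b' = 0 := by
    exact pow_eq_zero_iff (by norm_num) |>.mp h3
  linarith

end Final
end Ex31V2


open Ex31 Ex31V2 in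
/-- **Example 3.1.** With `Ω = (0,1)³` and `P(x) = (x₁²+x₂²+x₃²)/2 - x₁x₂/2`, if `f̂` is
smooth on `closure Ω`, equals `3/4` at the eight vertices and satisfies `0 < f̂ < 3/4`
elsewhere, then there is no convex `u ∈ C²(closure Ω)` with `det D²u = f̂` in `Ω` and
`u = P` on `∂Ω`. -/
theorem no_C2_solution_cube
    (P : EuclideanSpace ℝ (Fin 3) → ℝ)
    (hP : P = fun x => (x 0 ^ 2 + x 1 ^ 2 + x 2 ^ 2) / 2 - x 0 * x 1 / 2)
    (f : EuclideanSpace ℝ (Fin 3) → ℝ)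
    (hf : ContDiffOn ℝ (⊤ : ℕ∞) f (closure unitCube))
    (hfvertex : ∀ x ∈ closure unitCube, IsCubeVertex x → f x = 3 / 4)
    (hfin : ∀ x ∈ closure unitCube, ¬ IsCubeVertex x → 0 < f x ∧ f x < 3 / 4) :
    ¬ ∃ u : EuclideanSpace ℝ (Fin 3) → ℝ,
        ConvexOn ℝ (closure unitCube) u ∧
        ContDiffOn ℝ 2 u (closure unitCube) ∧
        (∀ x ∈ unitCube, detD2₃ u x = f x) ∧
        (∀ x ∈ frontier unitCube, u x = P x) := by
  subst hP
  rintro ⟨u, hconv, hu, hdet, hbd⟩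
  have hbd' : ∀ x ∈ frontier unitCube, u x = Pf x := fun x hx => hbd x hx
  have hfc : ContinuousOn f (closure unitCube) := hf.continuousOn
  have hgeP : ∀ x ∈ closure unitCube, Pf x ≤ u x := u_ge_Pf hu hbd' hdet hfin
  have hdetK := detE_eq_f hu hfc hdet
  -- edge entry functions
  set b : ℝ → ℝ := fun t => Hu u (pt t) (ee 0) (ee 1) with hbdef
  set b' : ℝ → ℝ := fun t => Hu u (pt t) (ee 1) (ee 0) with hb'def
  set c : ℝ → ℝ := fun t => Hu u (pt t) (ee 0) (ee 2) with hcdef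
  set d : ℝ → ℝ := fun t => Hu u (pt t) (ee 1) (ee 2) with hddef
  have hptK : ∀ {t : ℝ}, t ∈ Set.Icc (0:ℝ) (1/2) → pt t ∈ closure unitCube :=
    fun ht => frontier_subset_K (pt_mem_frontier ht)
  -- determinant identity along the edge
  have hdet_t : ∀ t ∈ Set.Icc (0:ℝ) (1/2),
      1 + (c t)^2 + (d t)^2 - (b t)*(b' t) - (c t)*(d t)*((b t)+(b' t)) = f (pt t) := by
    intro t ht
    have hids := edge_ids hu hbd' ht
    have h := hdetK (pt t) (hptK ht)
    rw [← h]
    unfold detE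
    rw [hids.1, hids.2.1, hids.2.2.1, hids.2.2.2.1, hids.2.2.2.2.1]
    simp only [hbdef, hb'def, hcdef, hddef]
    ring
  -- sigma bounds
  have hσlow : ∀ t ∈ Set.Icc (0:ℝ) (1/2), -1 ≤ b t + b' t := by
    intro t ht
    have hq := quadrant hu hbd' hgeP ht
    have hids := edge_ids hu hbd' ht
    rw [expand2, hids.1, hids.2.1] at hq
    simp only [hbdef, hb'def]
    linarith
  have hσhigh : ∀ t ∈ Set.Icc (0:ℝ) (1/2), b t + b' t ≤ 2 := by
    intro t ht
    have hp := hu_psd_K hu hconv (ee 0 - ee 1) (pt t) (hptK ht)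
    have hids := edge_ids hu hbd' ht
    rw [expand2m, hids.1, hids.2.1] at hp
    simp only [hbdef, hb'def]
    linarith
  -- vertex values
  have hvtx : IsCubeVertex (pt 0) := by
    intro i
    left
    simp [pt]
  have hfvtx : f (pt 0) = 3/4 := hfvertex (pt 0) (hptK (by norm_num)) hvtx
  have hσ0 : b 0 + b' 0 = -1 := vertex_id hu hbd'
  have hb0 : b 0 = -1/2 := by
    apply b_at_vertex hσ0
    rw [hdet_t 0 (by norm_num), hfvtx]
  -- positivity on the open edge
  have hbpos : ∀ t ∈ Set.Ioc (0:ℝ) (1/2), 0 < b t := by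
    intro t ht
    have ht' : t ∈ Set.Icc (0:ℝ) (1/2) := ⟨ht.1.le, ht.2⟩
    have hnvx : ¬ IsCubeVertex (pt t) := by
      intro hvx
      have h2 : (pt t) 2 = t := by
        simp [pt, ee, PiLp.smul_apply, EuclideanSpace.single_apply, smul_eq_mul]
      rcases hvx 2 with h | h <;> rw [h2] at h
      · exact absurd h (ne_of_gt ht.1)
      · rw [h] at ht; linarith [ht.2]
    have hfv : f (pt t) < 3/4 := (hfin (pt t) (hptK ht') hnvx).2
    exact bpos_lemma (hσlow t ht') (hσhigh t ht') (hdet_t t ht') hfv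
  -- continuity contradiction at the vertex
  have hptcont : Continuous pt := by
    have : Continuous fun t : ℝ => t • (ee 2) := continuous_id.smul continuous_const
    exact this
  have hbcont : ContinuousOn b (Set.Icc (0:ℝ) (1/2)) := by
    exact (Hu_entry_cont hu (ee 0) (ee 1)).comp hptcont.continuousOn
      (fun t ht => hptK ht)
  have hcwa : ContinuousWithinAt b (Set.Ioc (0:ℝ) (1/2)) 0 :=
    (hbcont 0 (by norm_num)).mono Set.Ioc_subset_Icc_self
  haveI : (nhdsWithin (0:ℝ) (Set.Ioc (0:ℝ) (1/2))).NeBot :=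
    left_nhdsWithin_Ioc_neBot (by norm_num)
  have hev : ∀ᶠ t in nhdsWithin (0:ℝ) (Set.Ioc (0:ℝ) (1/2)), b t < 0 := by
    have : Filter.Tendsto b (nhdsWithin (0:ℝ) (Set.Ioc (0:ℝ) (1/2))) (nhds (-1/2)) := by
      rw [← hb0]; exact hcwa
    exact this.eventually_lt_const (by norm_num)
  have hmem : ∀ᶠ t in nhdsWithin (0:ℝ) (Set.Ioc (0:ℝ) (1/2)), t ∈ Set.Ioc (0:ℝ) (1/2) :=
    self_mem_nhdsWithin
  obtain ⟨t, hlt, htmem⟩ := (hev.and hmem).exists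
  exact absurd (hbpos t htmem) (by linarith)
end
end
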